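/- arXiv:2401.08538 — 2 statements merged into one kernel-verified Lean document; each statement's English description precedes it below -/
import Mathlib

section
/- For the two-dimensional incompressible neo-Hookean dual integrand g(A,a,B,s) = sup_{F, y, p} [a·y + s(det F − 1) + A:F + B:(F − p cof F) − (1/2)|y|² − (1/2)|F|² − (1/4)p⁴], if |s| ≤ 1 then g(A,a,B,s) ≥ c(|a|² + |A+B|² + |B|⁴) − 1 for a universal constant c > 0. -/
open Matrix

noncomputable def frobSq (F : Matrix (Fin 2) (Fin 2) ℝ) : ℝ :=
  ∑ i, ∑ j, (F i j) ^ 2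

noncomputable def mdot (A B : Matrix (Fin 2) (Fin 2) ℝ) : ℝ :=
  ∑ i, ∑ j, A i j * B i j

/-- The cofactor matrix: the transpose of the adjugate. -/
def cof (F : Matrix (Fin 2) (Fin 2) ℝ) : Matrix (Fin 2) (Fin 2) ℝ :=
  (Matrix.adjugate F)ᵀ

/-- The integrand of the neo-Hookean dual supremum. -/
noncomputable def nhIntegrand (A B : Matrix (Fin 2) (Fin 2) ℝ) (a : Fin 2 → ℝ) (s : ℝ)
    (F : Matrix (Fin 2) (Fin 2) ℝ) (y : Fin 2 → ℝ) (p : ℝ) : ℝ :=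
  (∑ i, a i * y i) + s * (F.det - 1) + mdot A F + mdot B (F - p • cof F)
    - (1/2) * (∑ i, (y i) ^ 2) - (1/2) * frobSq F - (1/4) * p ^ 4

/-- The neo-Hookean dual integrand g(A,a,B,s), as an extended-real supremum. -/
noncomputable def gNH (A B : Matrix (Fin 2) (Fin 2) ℝ) (a : Fin 2 → ℝ) (s : ℝ) : EReal :=
  ⨆ (F : Matrix (Fin 2) (Fin 2) ℝ) (y : Fin 2 → ℝ) (p : ℝ),
    ((nhIntegrand A B a s F y p : ℝ) : EReal)

lemma val1 (A B : Matrix (Fin 2) (Fin 2) ℝ) (a : Fin 2 → ℝ) (s : ℝ) :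
    nhIntegrand A B a s ((1/2 : ℝ) • (A + B)) a 0 =
      (1/2) * (∑ i, (a i)^2) + s * ((1/4) * (A + B).det - 1) + (3/8) * frobSq (A + B) := by
  simp only [nhIntegrand, frobSq, mdot, cof, Matrix.det_fin_two, Matrix.adjugate_fin_two,
    Fin.sum_univ_two, Matrix.smul_apply, Matrix.add_apply, Matrix.sub_apply,
    Matrix.transpose_apply, Matrix.of_apply, Matrix.cons_val', Matrix.cons_val_zero,
    Matrix.cons_val_one, Matrix.head_cons, Matrix.head_fin_const, smul_eq_mul]
  ring

lemma val2 (A B : Matrix (Fin 2) (Fin 2) ℝ) (a : Fin 2 → ℝ) (s t : ℝ) :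
    nhIntegrand A B a s ((-t : ℝ) • cof B) a (2*t) =
      (1/2) * (∑ i, (a i)^2) + s * (t^2 * B.det - 1) - t * mdot (A + B) (cof B)
        + (3/2) * t^2 * frobSq B - 4 * t^4 := by
  simp only [nhIntegrand, frobSq, mdot, cof, Matrix.det_fin_two, Matrix.adjugate_fin_two,
    Fin.sum_univ_two, Matrix.smul_apply, Matrix.add_apply, Matrix.sub_apply,
    Matrix.transpose_apply, Matrix.of_apply, Matrix.cons_val', Matrix.cons_val_zero,
    Matrix.cons_val_one, Matrix.head_cons, Matrix.head_fin_const, smul_eq_mul]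
  ring

lemma det_sq_le (M : Matrix (Fin 2) (Fin 2) ℝ) : M.det ^ 2 ≤ (frobSq M / 2) ^ 2 := by
  simp only [frobSq, Matrix.det_fin_two, Fin.sum_univ_two]
  nlinarith [sq_nonneg (M 0 0 - M 1 1), sq_nonneg (M 0 1 + M 1 0),
    sq_nonneg (M 0 0 + M 1 1), sq_nonneg (M 0 1 - M 1 0),
    sq_nonneg (M 0 0 * M 1 1 - M 0 1 * M 1 0)]

lemma frobSq_nonneg (M : Matrix (Fin 2) (Fin 2) ℝ) : 0 ≤ frobSq M := by
  simp only [frobSq, Fin.sum_univ_two]; positivity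

lemma frobSq_cof (B : Matrix (Fin 2) (Fin 2) ℝ) : frobSq (cof B) = frobSq B := by
  simp only [frobSq, cof, Matrix.adjugate_fin_two, Fin.sum_univ_two, Matrix.transpose_apply,
    Matrix.of_apply, Matrix.cons_val', Matrix.cons_val_zero, Matrix.cons_val_one,
    Matrix.head_cons, Matrix.head_fin_const]
  ring

lemma cs (M N : Matrix (Fin 2) (Fin 2) ℝ) : mdot M N ^ 2 ≤ frobSq M * frobSq N := by
  simp only [mdot, frobSq, Fin.sum_univ_two]
  nlinarith [sq_nonneg (M 0 0 * N 0 1 - M 0 1 * N 0 0), sq_nonneg (M 0 0 * N 1 0 - M 1 0 * N 0 0),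
    sq_nonneg (M 0 0 * N 1 1 - M 1 1 * N 0 0), sq_nonneg (M 0 1 * N 1 0 - M 1 0 * N 0 1),
    sq_nonneg (M 0 1 * N 1 1 - M 1 1 * N 0 1), sq_nonneg (M 1 0 * N 1 1 - M 1 1 * N 1 0)]


lemma aux1 (S m b2 d s : ℝ) (hm : 0 ≤ m) (hS : 0 ≤ S) (h1 : -1 ≤ s) (h2 : s ≤ 1)
    (hdet : d^2 ≤ (m/2)^2) (hc : b2 ≤ 128*m) :
    1/1024 * (S + m + b2) - 1 ≤ 1/2*S + s*(1/4*d - 1) + 3/8*m := by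
  have hd1 : d ≤ m/2 := by nlinarith
  have hd2 : -(m/2) ≤ d := by nlinarith
  have hsd : -(m) ≤ 2*(s*d) := by
    nlinarith [mul_nonneg (by linarith : (0:ℝ) ≤ 1 - s) (by linarith : (0:ℝ) ≤ m/2 - d),
      mul_nonneg (by linarith : (0:ℝ) ≤ 1 + s) (by linarith : (0:ℝ) ≤ m/2 + d)]
  have hss : s * (1/4 * d - 1) = 1/4 * (s*d) - s := by ring
  rw [hss]; linarith

lemma aux2 (S m b d X s t : ℝ) (hm : 0 ≤ m) (hb : 0 ≤ b) (hS : 0 ≤ S)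
    (h1 : -1 ≤ s) (h2 : s ≤ 1) (hdet : d^2 ≤ (b/2)^2) (hcs : X^2 ≤ m*b)
    (ht0 : 0 ≤ t) (ht2 : t^2 = b/8) (hc : 128*m ≤ b^2) :
    1/1024 * (S + m + b^2) - 1 ≤ 1/2*S + s*(t^2*d - 1) - t*X + 3/2*t^2*b - 4*t^4 := by
  have hd1 : d ≤ b/2 := by nlinarith
  have hd2 : -(b/2) ≤ d := by nlinarith
  have hsd0 : -(b) ≤ 2*(s*d) := by
    nlinarith [mul_nonneg (by linarith : (0:ℝ) ≤ 1 - s) (by linarith : (0:ℝ) ≤ b/2 - d),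
      mul_nonneg (by linarith : (0:ℝ) ≤ 1 + s) (by linarith : (0:ℝ) ≤ b/2 + d)]
  have hsd : -(b^2)/2 ≤ s*(b*d) := by
    nlinarith [mul_nonneg hb (by linarith : (0:ℝ) ≤ b + 2*(s*d))]
  have hX : t * X ≤ 2*m + b^2/64 := by
    have e1 : (t*X)^2 = (b/8) * X^2 := by rw [mul_pow, ht2]
    have e2 : (b/8) * X^2 ≤ (b/8) * (m*b) := mul_le_mul_of_nonneg_left hcs (by linarith)
    have e3 : (t*X)^2 ≤ (2*m + b^2/64)^2 := by rw [e1]; nlinarith [sq_nonneg (2*m - b^2/64)]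
    have hR : (0:ℝ) ≤ 2*m + b^2/64 := by positivity
    nlinarith [e3, hR]
  have ht4 : t^4 = (b/8)^2 := by rw [show t^4 = (t^2)^2 by ring, ht2]
  rw [ht2, ht4, show s*(b/8*d - 1) = 1/8*(s*(b*d)) - s by ring]
  linarith

theorem gNH_lower_bound :
    ∃ c : ℝ, 0 < c ∧
      ∀ (A B : Matrix (Fin 2) (Fin 2) ℝ) (a : Fin 2 → ℝ) (s : ℝ), |s| ≤ 1 →
        ((c * ((∑ i, (a i) ^ 2) + frobSq (A + B) + frobSq B ^ 2) - 1 : ℝ) : EReal)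
          ≤ gNH A B a s := by
  refine ⟨1/1024, by norm_num, fun A B a s hs => ?_⟩
  obtain ⟨h1, h2⟩ := abs_le.mp hs
  have key : ∀ (F : Matrix (Fin 2) (Fin 2) ℝ) (y : Fin 2 → ℝ) (p : ℝ),
      (1/1024 : ℝ) * ((∑ i, (a i) ^ 2) + frobSq (A + B) + frobSq B ^ 2) - 1
        ≤ nhIntegrand A B a s F y p →
      (((1/1024 : ℝ) * ((∑ i, (a i) ^ 2) + frobSq (A + B) + frobSq B ^ 2) - 1 : ℝ) : EReal)
        ≤ gNH A B a s := by
    intro F y p h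
    exact le_trans (EReal.coe_le_coe_iff.2 h)
      (le_iSup_of_le F (le_iSup_of_le y (le_iSup_of_le p le_rfl)))
  have hm : 0 ≤ frobSq (A + B) := frobSq_nonneg _
  have hb : 0 ≤ frobSq B := frobSq_nonneg _
  have hS : 0 ≤ (∑ i, (a i) ^ 2 : ℝ) := by positivity
  rcases le_or_gt (frobSq B ^ 2) (128 * frobSq (A + B)) with hc | hc
  · apply key ((1/2 : ℝ) • (A + B)) a 0
    rw [val1]
    exact aux1 _ _ _ _ _ hm hS h1 h2 (by simpa using det_sq_le (A + B)) hc
  · have ht2 : (Real.sqrt (frobSq B / 8))^2 = frobSq B / 8 := Real.sq_sqrt (by linarith)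
    apply key ((-(Real.sqrt (frobSq B / 8)) : ℝ) • cof B) a (2 * Real.sqrt (frobSq B / 8))
    rw [val2]
    refine aux2 _ _ _ _ _ _ _ hm hb hS h1 h2 (by simpa using det_sq_le B) ?_
      (Real.sqrt_nonneg _) ht2 (le_of_lt hc)
    have := cs (A + B) (cof B)
    rwa [frobSq_cof] at this
end

section
/- For the two-dimensional incompressible neo-Hookean dual integrand g as above, if |s| < 1 then g(A,a,B,s) ≤ C(|a|² + (1/(1−|s|))|A+B|² + (1/(1−|s|)²)|B|⁴ + 1) for a universal constant C > 0. -/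
open Matrix

/-- Purely polynomial core inequality, with `t = 1 - |s|` and `u = |s|`. -/
lemma polycore (t s u a0 a1 y0 y1 p f00 f01 f10 f11 m00 m01 m10 m11 b00 b01 b10 b11 : ℝ)
    (ht : 0 < t) (htu : u = 1 - t) (hsu : s ≤ u) (hsu' : -u ≤ s)
    (hdet : s * (f00 * f11 - f01 * f10) ≤ u * ((f00^2 + f01^2 + f10^2 + f11^2)/2)) :
    t^2 * (a0 * y0 + a1 * y1 + s * (f00 * f11 - f01 * f10 - 1)
      + (m00 * f00 + m01 * f01 + m10 * f10 + m11 * f11)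
      - p * (b00 * f11 - b01 * f10 - b10 * f01 + b11 * f00)
      - (1/2) * (y0^2 + y1^2) - (1/2) * (f00^2 + f01^2 + f10^2 + f11^2) - (1/4) * p^4)
    ≤ 4 * (a0^2 + a1^2) * t^2 + 4 * (m00^2 + m01^2 + m10^2 + m11^2) * t
      + 4 * (b00^2 + b01^2 + b10^2 + b11^2)^2 + 4 * t^2 := by
  have hdet2 : t^2 * (s * (f00 * f11 - f01 * f10)) ≤ t^2 * (u * ((f00^2 + f01^2 + f10^2 + f11^2)/2)) :=
    mul_le_mul_of_nonneg_left hdet (by positivity)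
  subst htu
  have hss : t^2 * (-s) ≤ t^2 * (1 - t) := mul_le_mul_of_nonneg_left (by linarith) (by positivity)
  linarith [mul_nonneg (sq_nonneg t) (sq_nonneg (a0 - y0)),
    mul_nonneg (sq_nonneg t) (sq_nonneg (a1 - y1)),
    mul_nonneg ht.le (sq_nonneg (t*f00 - 4*m00)), mul_nonneg ht.le (sq_nonneg (t*f01 - 4*m01)),
    mul_nonneg ht.le (sq_nonneg (t*f10 - 4*m10)), mul_nonneg ht.le (sq_nonneg (t*f11 - 4*m11)),
    mul_nonneg ht.le (sq_nonneg (t*f11 + 4*p*b00)), mul_nonneg ht.le (sq_nonneg (t*f10 - 4*p*b01)),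
    mul_nonneg ht.le (sq_nonneg (t*f01 - 4*p*b10)), mul_nonneg ht.le (sq_nonneg (t*f00 + 4*p*b11)),
    sq_nonneg (t*p^2 - 4*(b00^2 + b01^2 + b10^2 + b11^2)),
    mul_nonneg (mul_nonneg ht.le ht.le) (mul_nonneg ht.le (sq_nonneg f00)),
    mul_nonneg (mul_nonneg ht.le ht.le) (mul_nonneg ht.le (sq_nonneg f01)),
    mul_nonneg (mul_nonneg ht.le ht.le) (mul_nonneg ht.le (sq_nonneg f10)),
    mul_nonneg (mul_nonneg ht.le ht.le) (mul_nonneg ht.le (sq_nonneg f11)),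
    mul_nonneg (sq_nonneg t) (sq_nonneg a0), mul_nonneg (sq_nonneg t) (sq_nonneg a1),
    mul_nonneg ht.le (sq_nonneg m00), mul_nonneg ht.le (sq_nonneg m01),
    mul_nonneg ht.le (sq_nonneg m10), mul_nonneg ht.le (sq_nonneg m11),
    mul_nonneg (mul_nonneg ht.le ht.le) ht.le, sq_nonneg t, hdet2, hss]

set_option maxHeartbeats 1000000 in
lemma nh_key (A B : Matrix (Fin 2) (Fin 2) ℝ) (a : Fin 2 → ℝ) (s : ℝ) (hs : |s| < 1)
    (F : Matrix (Fin 2) (Fin 2) ℝ) (y : Fin 2 → ℝ) (p : ℝ) :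
    nhIntegrand A B a s F y p
      ≤ 4 * ((∑ i, (a i) ^ 2) + (1 / (1 - |s|)) * frobSq (A + B)
          + (1 / (1 - |s|) ^ 2) * frobSq B ^ 2 + 1) := by
  set t : ℝ := 1 - |s| with htd
  have ht : 0 < t := by rw [htd]; linarith
  have h1 : F 0 0 * F 1 1 - F 0 1 * F 1 0
      ≤ ((F 0 0)^2 + (F 0 1)^2 + (F 1 0)^2 + (F 1 1)^2)/2 := by
    nlinarith [sq_nonneg (F 0 0 - F 1 1), sq_nonneg (F 0 1 + F 1 0)]
  have h2 : -(((F 0 0)^2 + (F 0 1)^2 + (F 1 0)^2 + (F 1 1)^2)/2)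
      ≤ F 0 0 * F 1 1 - F 0 1 * F 1 0 := by
    nlinarith [sq_nonneg (F 0 0 + F 1 1), sq_nonneg (F 0 1 - F 1 0)]
  have hdet : s * (F 0 0 * F 1 1 - F 0 1 * F 1 0)
      ≤ |s| * (((F 0 0)^2 + (F 0 1)^2 + (F 1 0)^2 + (F 1 1)^2)/2) :=
    calc s * (F 0 0 * F 1 1 - F 0 1 * F 1 0) ≤ |s * (F 0 0 * F 1 1 - F 0 1 * F 1 0)| :=
          le_abs_self _
      _ = |s| * |F 0 0 * F 1 1 - F 0 1 * F 1 0| := abs_mul _ _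
      _ ≤ |s| * (((F 0 0)^2 + (F 0 1)^2 + (F 1 0)^2 + (F 1 1)^2)/2) :=
          mul_le_mul_of_nonneg_left (abs_le.2 ⟨h2, h1⟩) (abs_nonneg s)
  have main := polycore t s |s| (a 0) (a 1) (y 0) (y 1) p (F 0 0) (F 0 1) (F 1 0) (F 1 1)
    (A 0 0 + B 0 0) (A 0 1 + B 0 1) (A 1 0 + B 1 0) (A 1 1 + B 1 1)
    (B 0 0) (B 0 1) (B 1 0) (B 1 1) ht (by rw [htd]; ring) (le_abs_self s) (neg_abs_le s) hdet
  have hrhs : 4 * ((∑ i, (a i) ^ 2) + (1 / t) * frobSq (A + B)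
          + (1 / t ^ 2) * frobSq B ^ 2 + 1)
      = (4 * ((a 0)^2 + (a 1)^2) * t^2
          + 4 * ((A 0 0 + B 0 0)^2 + (A 0 1 + B 0 1)^2 + (A 1 0 + B 1 0)^2 + (A 1 1 + B 1 1)^2) * t
          + 4 * ((B 0 0)^2 + (B 0 1)^2 + (B 1 0)^2 + (B 1 1)^2)^2 + 4 * t^2) / t^2 := by
    simp only [frobSq, Fin.sum_univ_two, Matrix.add_apply]
    field_simp
    ring
  rw [hrhs, le_div_iff₀ (by positivity : (0:ℝ) < t^2)]
  simp only [nhIntegrand, mdot, frobSq, Fin.sum_univ_two, Matrix.det_fin_two, cof,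
    Matrix.adjugate_fin_two, Matrix.transpose_apply, Matrix.sub_apply, Matrix.smul_apply,
    Matrix.of_apply, smul_eq_mul, Matrix.cons_val', Matrix.cons_val_zero, Matrix.cons_val_one,
    Matrix.head_cons, Matrix.empty_val', Matrix.cons_val_fin_one, Matrix.head_fin_const]
  linarith [main]

theorem gNH_upper_bound :
    ∃ C : ℝ, 0 < C ∧
      ∀ (A B : Matrix (Fin 2) (Fin 2) ℝ) (a : Fin 2 → ℝ) (s : ℝ), |s| < 1 →
        gNH A B a s
          ≤ ((C * ((∑ i, (a i) ^ 2) + (1 / (1 - |s|)) * frobSq (A + B)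
              + (1 / (1 - |s|) ^ 2) * frobSq B ^ 2 + 1) : ℝ) : EReal) := by
  refine ⟨4, by norm_num, fun A B a s hs => ?_⟩
  rw [gNH]
  refine iSup_le fun F => iSup_le fun y => iSup_le fun p => ?_
  exact EReal.coe_le_coe_iff.2 (nh_key A B a s hs F y p)
end
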